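/- For every t ∈ ℂ with t ≠ 0, the bracket on ℂ⁴ given by the diamond Lie algebra brackets [e₁,e₂] = e₃, [e₂,e₁] = −e₃, [e₁,e₃] = −e₂, [e₃,e₁] = e₂, [e₂,e₃] = e₄, [e₃,e₂] = −e₄ together with the additional bracket [e₁,e₁] = t·e₄ (the deformation of the diamond Lie algebra 𝔡 along the Leibniz 2-cocycle φ₁(e₁,e₁) = e₄) is isomorphic to the Leibniz algebra 𝔏₂ on ℂ⁴ with bracket [e₁,e₂] = e₃, [e₂,e₁] = −e₃, [e₁,e₄] = e₁, [e₄,e₁] = −e₁, [e₄,e₂] = e₂, [e₂,e₄] = −e₂, [e₄,e₄] = e₃. -/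
import Mathlib

set_option maxHeartbeats 1000000

/-- The deformation of the diamond Lie algebra on `ℂ⁴`: the diamond brackets
`[e₁,e₂] = e₃`, `[e₂,e₁] = -e₃`, `[e₁,e₃] = -e₂`, `[e₃,e₁] = e₂`,
`[e₂,e₃] = e₄`, `[e₃,e₂] = -e₄`, together with `[e₁,e₁] = t·e₄`, in coordinates. -/
def diamondDeformed (t : ℂ) (x y : Fin 4 → ℂ) : Fin 4 → ℂ :=
  ![0,
    x 2 * y 0 - x 0 * y 2,
    x 0 * y 1 - x 1 * y 0,
    x 1 * y 2 - x 2 * y 1 + t * (x 0 * y 0)]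

/-- The bracket of the Leibniz algebra `𝔏₂` on `ℂ⁴`: `[e₁,e₂] = e₃`,
`[e₂,e₁] = -e₃`, `[e₁,e₄] = e₁`, `[e₄,e₁] = -e₁`, `[e₄,e₂] = e₂`,
`[e₂,e₄] = -e₂`, `[e₄,e₄] = e₃`, in coordinates. -/
def L2Bracket (x y : Fin 4 → ℂ) : Fin 4 → ℂ :=
  ![x 0 * y 3 - x 3 * y 0,
    x 3 * y 1 - x 1 * y 3,
    x 0 * y 1 - x 1 * y 0 + x 3 * y 3,
    0]

/-- The underlying map of the isomorphism. -/
noncomputable def Tf (t : ℂ) (x : Fin 4 → ℂ) : Fin 4 → ℂ :=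
  ![x 1 / 2 - Complex.I * x 2 / 2, Complex.I * x 1 / t - x 2 / t, -(x 3) / t, Complex.I * x 0]

/-- The inverse map of the isomorphism. -/
noncomputable def Tb (t : ℂ) (y : Fin 4 → ℂ) : Fin 4 → ℂ :=
  ![-Complex.I * y 3, y 0 - Complex.I * t * y 1 / 2, Complex.I * y 0 - t * y 1 / 2, -t * y 2]

noncomputable def Tequiv (t : ℂ) (ht : t ≠ 0) : (Fin 4 → ℂ) ≃ₗ[ℂ] (Fin 4 → ℂ) where
  toFun := Tf t
  invFun := Tb t
  left_inv x := by
    funext i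
    fin_cases i
    all_goals
      simp [Tf, Tb, diamondDeformed, L2Bracket]
      try field_simp
      try ring_nf
      try simp only [Complex.I_sq]
      try ring_nf
  right_inv y := by
    funext i
    fin_cases i
    all_goals
      simp [Tf, Tb, diamondDeformed, L2Bracket]
      try field_simp
      try ring_nf
      try simp only [Complex.I_sq]
      try ring_nf
  map_add' x y := by
    funext i
    fin_cases i
    all_goals
      simp [Tf, Tb, diamondDeformed, L2Bracket]
      try field_simp
      try ring_nf
      try simp only [Complex.I_sq]
      try ring_nf
  map_smul' c x := by
    funext i
    fin_cases i
    all_goals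
      simp [Tf, Tb, diamondDeformed, L2Bracket]
      try field_simp
      try ring_nf
      try simp only [Complex.I_sq]
      try ring_nf

theorem Tequiv_apply (t : ℂ) (ht : t ≠ 0) (x : Fin 4 → ℂ) : Tequiv t ht x = Tf t x := rfl

/-- For every `t ≠ 0`, the deformation of the diamond Lie algebra `𝔡` along the
Leibniz 2-cocycle `φ₁(e₁,e₁) = e₄` is isomorphic to `𝔏₂`. -/
theorem diamond_deformation_iso_L2 :
    ∀ t : ℂ, t ≠ 0 →
      ∃ T : (Fin 4 → ℂ) ≃ₗ[ℂ] (Fin 4 → ℂ),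
        ∀ x y : Fin 4 → ℂ, T (diamondDeformed t x y) = L2Bracket (T x) (T y) := by
  intro t ht
  refine ⟨Tequiv t ht, fun x y => ?_⟩
  rw [Tequiv_apply, Tequiv_apply, Tequiv_apply]
  funext i
  fin_cases i
  all_goals
    simp [Tf, diamondDeformed, L2Bracket]
    try field_simp
    try ring_nf
    try simp only [Complex.I_sq]
    try ring_nf
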